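/- If a hypothesis class H admits a total computable online learner making at most d mistakes on every H-realizable sample, then the effective Littlestone dimension of H is at most d. -/

import Mathlib

/-- A sample: a finite sequence of (point, label) pairs. -/
abbrev Sample := List (ℕ × Bool)

/-- A sample is consistent with `f` if `f` agrees with every labeled pair. -/
def Consistent (f : ℕ → Bool) (S : Sample) : Prop := ∀ p ∈ S, f p.1 = p.2

/-- A sample is realizable by `H` if some function in `H` is consistent with it. -/
def Realizable (H : Set (ℕ → Bool)) (S : Sample) : Prop := ∃ f ∈ H, Consistent f S

/-- A (total) learner maps a sample and a query point to a prediction. -/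
abbrev Learner := Sample → ℕ → Bool

/-- Number of sequential prediction mistakes of learner `L` on sample `S`. -/
def mistakes (L : Learner) (S : Sample) : ℕ :=
  (List.range S.length).countP fun i =>
    decide (L (S.take i) (S.getD i (0, false)).1 ≠ (S.getD i (0, false)).2)

/-- Code of a Littlestone tree: association list assigning labels to nodes
(nodes are indexed by the bit-path leading to them; missing nodes get label 0). -/
abbrev TreeCode := List (List Bool × ℕ)

/-- Label of the node reached by path `p` in the tree coded by `T`. -/
def nodeLabel (T : TreeCode) (p : List Bool) : ℕ := (T.lookup p).getD 0

/-- The sample written along the branch `p` (a list of edge bits) in the tree `T`. -/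
def branchSample (T : TreeCode) (p : List Bool) : Sample :=
  (List.range p.length).map fun i => (nodeLabel T (p.take i), p.getD i false)

/-- `H` has Littlestone dimension at most `d`: every Littlestone tree of depth `d+1`
has a leaf whose branch sample is not `H`-realizable. -/
def LdimLe (H : Set (ℕ → Bool)) (d : ℕ) : Prop :=
  ∀ T : TreeCode, ∃ p : List Bool, p.length = d + 1 ∧ ¬ Realizable H (branchSample T p)

/-- The Littlestone dimension of `H` (`⊤` if infinite). -/
noncomputable def Ldim (H : Set (ℕ → Bool)) : ℕ∞ :=
  sInf ((↑) '' {d : ℕ | LdimLe H d})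

/-- `H` has effective Littlestone dimension at most `d`: a total computable function
indicates, in every depth-`(d+1)` Littlestone tree, a leaf that is not `H`-realizable. -/
def EldimLe (H : Set (ℕ → Bool)) (d : ℕ) : Prop :=
  ∃ A : TreeCode → List Bool, Computable A ∧
    ∀ T, (A T).length = d + 1 ∧ ¬ Realizable H (branchSample T (A T))

/-- The effective Littlestone dimension of `H` (`⊤` if infinite). -/
noncomputable def Eldim (H : Set (ℕ → Bool)) : ℕ∞ :=
  sInf ((↑) '' {d : ℕ | EldimLe H d})

/-- The cylinder induced by a sample: all functions consistent with it. -/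
def Cyl (S : Sample) : Set (ℕ → Bool) := {f | Consistent f S}

/-- Effectively open subset of Cantor space: union of a computably enumerated
family of cylinders. -/
def EffOpen (X : Set (ℕ → Bool)) : Prop :=
  ∃ g : ℕ → Sample, Computable g ∧ X = ⋃ n, Cyl (g n)

/-- Effectively closed subset of Cantor space: complement is effectively open. -/
def EffClosed (X : Set (ℕ → Bool)) : Prop := EffOpen Xᶜ

lemma nodeLabel_primrec : Primrec₂ nodeLabel := by
  -- `List.lookup` is stated with the structural `BEq` on lists, `Primrec.listLookup` with the
  -- one derived from `DecidableEq`.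
  have hbeq : (List.instBEq : BEq (List Bool)) = instBEqOfDecidableEq :=
    lawful_beq_subsingleton _ _
  unfold nodeLabel
  rw [hbeq]
  exact Primrec.option_getD.comp (Primrec.listLookup.comp Primrec.snd Primrec.fst)
    (Primrec.const 0)

lemma branchSample_concat (T : TreeCode) (p : List Bool) (b : Bool) :
    branchSample T (p ++ [b]) = branchSample T p ++ [(nodeLabel T p, b)] := by
  unfold branchSample
  rw [List.length_append, List.length_singleton, List.range_succ, List.map_append]
  congr 1
  · refine List.map_congr_left fun i hi => ?_
    rw [List.mem_range] at hi
    rw [List.take_append_of_le_length hi.le, List.getD_append _ _ _ _ hi]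
  · simp

lemma mistakes_concat (L : Learner) (S : Sample) (e : ℕ × Bool) :
    mistakes L (S ++ [e]) = mistakes L S + if L S e.1 = e.2 then 0 else 1 := by
  unfold mistakes
  rw [List.length_append, List.length_singleton, List.range_succ, List.countP_append]
  congr 1
  · refine List.countP_congr fun i hi => ?_
    rw [List.mem_range] at hi
    rw [List.take_append_of_le_length hi.le, List.getD_append _ _ _ _ hi]
  · by_cases h : L S e.1 = e.2 <;> simp [h]

section Adversary

variable (L : Learner) (T : TreeCode)

/-- The sample played so far is carried along so that each round is a primitive recursive
operation on the state, instead of recomputing `branchSample`. -/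
def adversaryStep (q : List Bool × Sample) : List Bool × Sample :=
  let x := nodeLabel T q.1
  let b := !L q.2 x
  (q.1 ++ [b], q.2 ++ [(x, b)])

def adversaryRun (n : ℕ) : List Bool × Sample :=
  (adversaryStep L T)^[n] ([], [])

lemma adversaryRun_succ (n : ℕ) :
    adversaryRun L T (n + 1) = adversaryStep L T (adversaryRun L T n) :=
  Function.iterate_succ_apply' _ _ _

lemma adversaryRun_length (n : ℕ) : (adversaryRun L T n).1.length = n := by
  induction n with
  | zero => rfl
  | succ n ih => simp [adversaryRun_succ, adversaryStep, ih]

lemma adversaryRun_snd (n : ℕ) :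
    (adversaryRun L T n).2 = branchSample T (adversaryRun L T n).1 := by
  induction n with
  | zero => rfl
  | succ n ih => simp only [adversaryRun_succ, adversaryStep, branchSample_concat, ih]

lemma mistakes_adversaryRun (n : ℕ) : mistakes L (adversaryRun L T n).2 = n := by
  induction n with
  | zero => rfl
  | succ n ih => simp [adversaryRun_succ, adversaryStep, mistakes_concat, ih]

variable {L}

lemma adversaryStep_computable (hL : Computable₂ L) :
    Computable₂ fun (T : TreeCode) (q : List Bool × Sample) => adversaryStep L T q := by
  have hx : Computable fun a : TreeCode × (List Bool × Sample) => nodeLabel a.1 a.2.1 :=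
    nodeLabel_primrec.to_comp.comp Computable.fst (Computable.fst.comp Computable.snd)
  have hb : Computable fun a : TreeCode × (List Bool × Sample) =>
      !L a.2.2 (nodeLabel a.1 a.2.1) :=
    Primrec.not.to_comp.comp (hL.comp (Computable.snd.comp Computable.snd) hx)
  exact Computable.pair
    (Primrec.list_concat.to_comp.comp (Computable.fst.comp Computable.snd) hb)
    (Primrec.list_concat.to_comp.comp (Computable.snd.comp Computable.snd)
      (Computable.pair hx hb))

lemma adversaryRun_computable (hL : Computable₂ L) (n : ℕ) :
    Computable fun T => adversaryRun L T n := by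
  induction n with
  | zero => exact Computable.const ([], [])
  | succ n ih =>
    simp only [adversaryRun_succ]
    exact (adversaryStep_computable hL).comp Computable.id ih

end Adversary

theorem eldimLe_of_mistakes_le {H : Set (ℕ → Bool)} {d : ℕ} {L : Learner}
    (hL : Computable₂ L) (hm : ∀ S, Realizable H S → mistakes L S ≤ d) : EldimLe H d := by
  refine ⟨fun T => (adversaryRun L T (d + 1)).1,
    Computable.fst.comp (adversaryRun_computable hL (d + 1)), fun T => ?_⟩
  refine ⟨adversaryRun_length L T (d + 1), fun hreal => ?_⟩
  have hbound := hm _ hreal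
  rw [← adversaryRun_snd, mistakes_adversaryRun] at hbound
  omega

theorem stmt15 (H : Set (ℕ → Bool)) (d : ℕ) (L : Learner) (hc : Computable₂ L)
    (hm : ∀ S : Sample, Realizable H S → mistakes L S ≤ d) :
    Eldim H ≤ (d : ℕ∞) :=
  sInf_le ⟨d, eldimLe_of_mistakes_le hc hm, rfl⟩
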